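/- For any 0 < β₁ < β₂ < ∞ there exists a constant C_g = C_g(d, β₁/β₂) > 0 such that, with C_β := min(β₂ − β₁, β₁/2), for all t > 0 and x, y, z ∈ ℝ^d: ∫_0^t g_{d,β₁}(t−s, x−z) · s^{-1/2} · g_{d,β₂}(s, z−y) ds ≤ C_g · (N^{C_β}(t, x−z) + N^{C_β}(t, z−y)) · g_{d,β₁}(t, x−y). -/

import Mathlib

open MeasureTheory Filter
open scoped Topology RealInnerProductSpace

noncomputable section

/-- Euclidean space `ℝ^d`. -/
abbrev Euc (d : ℕ) := EuclideanSpace ℝ (Fin d)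

/-- The transition density `p^a_n(t,z)` of the Lévy process with generator
`Δ + a^α Δ^{α/2}` in dimension `n`:
`p^a_n(t,z) = (2π)^{-n} ∫ e^{-i z·ξ} e^{-t(|ξ|² + a^α |ξ|^α)} dξ`. -/
def pker (n : ℕ) (α a t : ℝ) (z : Euc n) : ℝ :=
  (2 * Real.pi) ^ (-(n : ℝ)) *
    (∫ ξ : Euc n,
      Complex.exp (-(Complex.I * (⟪z, ξ⟫ : ℂ))) *
        (Real.exp (-t * (‖ξ‖ ^ 2 + a ^ α * ‖ξ‖ ^ α)) : ℂ)).re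

/-- The Gaussian-type kernel `g_{n,β}(t,r) = t^{-n/2} exp(-β r² / t)`, as a function of
the radial variable `r = |z|` (with a real dimension parameter `n`). -/
def gker (n β t r : ℝ) : ℝ := t ^ (-n / 2) * Real.exp (-(β * r ^ 2) / t)

/-- The comparison kernel
`q^a_{n,β}(t,r) = t^{-n/2} exp(-β r²/t) + min (t^{-n/2}) (a^α t / r^{n+α})`, as a function of
the radial variable `r = |z|` (with the convention that at `r = 0` the second summand
equals `t^{-n/2}`, since `a^α t / r^{n+α} = +∞` there). -/
def qker (α n β a t r : ℝ) : ℝ :=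
  gker n β t r +
    (if r = 0 then t ^ (-n / 2) else min (t ^ (-n / 2)) (a ^ α * t / r ^ (n + α)))

/-- The kernel `H^β(r,s) = min (s^{-(d-1)}) (r^β s^{-(d-1+2β)})`, as a function of the
radial variable `s = |z|`. -/
def Hker (d : ℕ) (β r s : ℝ) : ℝ :=
  min (s ^ (-((d : ℝ) - 1))) (r ^ β * s ^ (-((d : ℝ) - 1 + 2 * β)))

/-- `N^β(r,s) = ∫_0^r u^{-(d+1)/2} exp(-β s²/u) du`, as a function of the radial
variable `s = |z|`. -/
def Nker (d : ℕ) (β r s : ℝ) : ℝ :=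
  ∫ u in Set.Ioc (0 : ℝ) r, u ^ (-((d : ℝ) + 1) / 2) * Real.exp (-(β * s ^ 2) / u)

/-- `H_f^β(r,x) = ∫ |f(y)| H^β(r, x - y) dy`. -/
def HInt (d k : ℕ) (f : Euc d → Euc k) (β r : ℝ) (x : Euc d) : ℝ :=
  ∫ y : Euc d, ‖f y‖ * Hker d β r ‖x - y‖

/-- The Kato-type quantity `M_f(r) = sup_x ∫_{|x-y|<r} |f(y)| / |x-y|^{d-1} dy`. -/
def MK (d k : ℕ) (f : Euc d → Euc k) (r : ℝ) : ℝ :=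
  ⨆ x : Euc d, ∫ y in Metric.ball x r, ‖f y‖ / ‖x - y‖ ^ ((d : ℝ) - 1)

/-- `f` belongs to the Kato class `K_{d,1}` iff `M_f(r) → 0` as `r ↓ 0`. -/
def KatoClass (d k : ℕ) (f : Euc d → Euc k) : Prop :=
  Filter.Tendsto (MK d k f) (𝓝[>] (0 : ℝ)) (𝓝 0)

/-- The iterated kernels `p_k^{a,b}`:  `p_0^{a,b}(t,x,y) = p^a(t,x-y)` and
`p_k^{a,b}(t,x,y) = ∫_0^t ∫ p_{k-1}^{a,b}(t-s,x,z) (b(z)·∇p^a(s,z-y)) dz ds`. -/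
def pk (d : ℕ) (α a : ℝ) (b : Euc d → Euc d) : ℕ → ℝ → Euc d → Euc d → ℝ
  | 0 => fun t x y => pker d α a t (x - y)
  | k + 1 => fun t x y =>
      ∫ s in Set.Ioc (0 : ℝ) t, ∫ z : Euc d,
        pk d α a b k (t - s) x z * ⟪b z, gradient (pker d α a s) (z - y)⟫

/-- The majorizing iterated kernels `|p|_k^{a,b}`. -/
def apk (d : ℕ) (α a : ℝ) (b : Euc d → Euc d) : ℕ → ℝ → Euc d → Euc d → ℝ
  | 0 => fun t x y => pker d α a t (x - y)
  | k + 1 => fun t x y =>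
      ∫ s in Set.Ioc (0 : ℝ) t, ∫ z : Euc d,
        apk d α a b k (t - s) x z * (‖b z‖ * ‖gradient (pker d α a s) (z - y)‖)

/-!
Pointwise, `s^{-1/2} g_{d,β₂}(s, ·) = g_{d+1,β₂}(s, ·)` and `N^β(t, w) = ∫_0^t g_{d+1,β}(u, w) du`.
Split `(0, t)` at `θ t`. For `s ≤ θ t` the factor `(t - s)^{-d/2}` is at most
`(1 - θ)^{-d/2} t^{-d/2}`; for `s ≥ θ t` the factor `s^{-(d+1)/2}` is at most
`θ^{-(d+1)/2} t^{-(d+1)/2}`, and `(t - s)^{-d/2} ≤ t^{1/2} (t - s)^{-(d+1)/2}`. In both regions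
`(a + b)²/(p + q) ≤ a²/p + b²/q`, with `a = |x - z|`, `b = |z - y|`, merges the two exponentials
into `exp(-β₁|x - y|²/t)` while spending only part of one rate; the leftover rate `C_β` stays on
`g_{d+1}` at time `s`, resp. `t - s`, and integrates to `N^{C_β}`.
-/

open Set Real

lemma gker_nonneg {n β t r : ℝ} (ht : 0 ≤ t) : 0 ≤ gker n β t r :=
  mul_nonneg (rpow_nonneg ht _) (exp_pos _).le

@[simp]
lemma gker_zero_right (n β t : ℝ) : gker n β t 0 = t ^ (-n / 2) := by
  simp [gker]

lemma gker_le_gker_of_le_rate {n β β' t : ℝ} (r : ℝ) (ht : 0 ≤ t) (hβ : β ≤ β') :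
    gker n β' t r ≤ gker n β t r := by
  unfold gker
  gcongr

lemma rpow_neg_one_half_mul_gker {n β s : ℝ} (r : ℝ) (hs : 0 < s) :
    s ^ (-(1 : ℝ) / 2) * gker n β s r = gker (n + 1) β s r := by
  rw [gker, gker, ← mul_assoc, ← rpow_add hs]
  ring_nf

lemma Nker_eq_integral_gker (d : ℕ) (β r s : ℝ) :
    Nker d β r s = ∫ u in Ioc 0 r, gker (d + 1) β u s := rfl

lemma Nker_nonneg (d : ℕ) (β r s : ℝ) : 0 ≤ Nker d β r s :=
  setIntegral_nonneg measurableSet_Ioc fun _ hu => gker_nonneg hu.1.le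

lemma rpow_mul_exp_le_gker {n β T₀ T u : ℝ} (r : ℝ) (hn : 0 ≤ n) (hβ : 0 ≤ β) (hT₀ : 0 < T₀)
    (hu₀ : T₀ ≤ u) (huT : u ≤ T) :
    T ^ (-n / 2) * exp (-(β * r ^ 2) / T₀) ≤ gker n β u r := by
  have hu : 0 < u := hT₀.trans_le hu₀
  unfold gker
  refine mul_le_mul (rpow_le_rpow_of_nonpos hu huT (by linarith)) ?_ (exp_pos _).le
    (rpow_nonneg hu.le _)
  rw [exp_le_exp, neg_div, neg_div, neg_le_neg_iff]
  gcongr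

lemma add_sq_div_add_le (a b : ℝ) {p q : ℝ} (hp : 0 < p) (hq : 0 < q) :
    (a + b) ^ 2 / (p + q) ≤ a ^ 2 / p + b ^ 2 / q := by
  rw [div_add_div _ _ hp.ne' hq.ne', div_le_div_iff₀ (by positivity) (by positivity)]
  nlinarith [sq_nonneg (a * q - b * p), mul_pos hp hq]

lemma exp_mul_exp_le_of_div_add_div_le {α β γ s t a b c : ℝ} (hα : 0 < α) (hβ : 0 < β) (hγ : 0 < γ)
    (hs : 0 < s) (hst : s < t) (hc : 0 ≤ c) (hcab : c ≤ a + b)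
    (hvar : (t - s) / α + s / γ ≤ t / β) :
    exp (-(α * a ^ 2) / (t - s)) * exp (-(γ * b ^ 2) / s) ≤ exp (-(β * c ^ 2) / t) := by
  have hts : 0 < t - s := by linarith
  have ht : 0 < t := hs.trans hst
  suffices β * c ^ 2 / t ≤ α * a ^ 2 / (t - s) + γ * b ^ 2 / s by
    rw [← exp_add, exp_le_exp, neg_div, neg_div, neg_div]
    linarith
  calc β * c ^ 2 / t ≤ (a + b) ^ 2 / (t / β) := by
        rw [div_div_eq_mul_div, mul_comm]; gcongr
    _ ≤ (a + b) ^ 2 / ((t - s) / α + s / γ) := by gcongr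
    _ ≤ a ^ 2 / ((t - s) / α) + b ^ 2 / (s / γ) :=
        add_sq_div_add_le a b (by positivity) (by positivity)
    _ = α * a ^ 2 / (t - s) + γ * b ^ 2 / s := by field_simp

lemma rpow_mul_rpow_le_rpow_mul_rpow {u t p q : ℝ} (hu : 0 < u) (hut : u ≤ t) (hqp : q ≤ p) :
    u ^ p * t ^ q ≤ t ^ p * u ^ q := by
  have ht : 0 < t := hu.trans_le hut
  rw [show p = q + (p - q) by ring, rpow_add hu, rpow_add ht]
  calc u ^ q * u ^ (p - q) * t ^ q = u ^ q * t ^ q * u ^ (p - q) := by ring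
    _ ≤ u ^ q * t ^ q * t ^ (p - q) := by gcongr
    _ = t ^ q * t ^ (p - q) * u ^ q := by ring

lemma gker_mul_gker_le_of_le_mul {n m β₁ β₂ θ s t a b c : ℝ} (hn : 0 ≤ n) (hβ₁ : 0 < β₁)
    (hθ : θ < 1) (hs : 0 < s) (hst : s < t) (hsθ : s ≤ θ * t) (hc : 0 ≤ c)
    (hcab : c ≤ a + b) :
    gker n β₁ (t - s) a * gker m β₂ s b ≤
      (1 - θ) ^ (-n / 2) * gker n β₁ t c * gker m (β₂ - β₁) s b := by
  have ht : 0 < t := hs.trans hst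
  have hpow : (t - s) ^ (-n / 2) ≤ (1 - θ) ^ (-n / 2) * t ^ (-n / 2) := by
    rw [← mul_rpow (by linarith) ht.le]
    exact rpow_le_rpow_of_nonpos (by nlinarith) (by nlinarith) (by linarith)
  have hexp : exp (-(β₁ * a ^ 2) / (t - s)) * exp (-(β₂ * b ^ 2) / s) ≤
      exp (-(β₁ * c ^ 2) / t) * exp (-((β₂ - β₁) * b ^ 2) / s) := by
    rw [show exp (-(β₂ * b ^ 2) / s) = exp (-(β₁ * b ^ 2) / s) * exp (-((β₂ - β₁) * b ^ 2) / s)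
      by rw [← exp_add]; ring_nf, ← mul_assoc]
    gcongr
    exact exp_mul_exp_le_of_div_add_div_le hβ₁ hβ₁ hβ₁ hs hst hc hcab
      (by rw [← add_div, sub_add_cancel])
  unfold gker
  calc (t - s) ^ (-n / 2) * exp (-(β₁ * a ^ 2) / (t - s)) *
        (s ^ (-m / 2) * exp (-(β₂ * b ^ 2) / s))
      = (t - s) ^ (-n / 2) * s ^ (-m / 2) *
          (exp (-(β₁ * a ^ 2) / (t - s)) * exp (-(β₂ * b ^ 2) / s)) := by ring
    _ ≤ (1 - θ) ^ (-n / 2) * t ^ (-n / 2) * s ^ (-m / 2) *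
          (exp (-(β₁ * c ^ 2) / t) * exp (-((β₂ - β₁) * b ^ 2) / s)) := by gcongr
    _ = _ := by ring

lemma gker_mul_gker_succ_le_of_mul_le {n β₁ β₂ C θ s t a b c : ℝ} (hn : 0 ≤ n)
    (hβ₁ : 0 < β₁) (hβ₂ : 0 < β₂) (hC : C < β₁) (hθ : 0 < θ) (hs : 0 < s) (hst : s < t)
    (hsθ : θ * t ≤ s) (hvar : (t - s) / (β₁ - C) + s / β₂ ≤ t / β₁) (hc : 0 ≤ c)
    (hcab : c ≤ a + b) :
    gker n β₁ (t - s) a * gker (n + 1) β₂ s b ≤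
      θ ^ (-(n + 1) / 2) * gker n β₁ t c * gker (n + 1) C (t - s) a := by
  have ht : 0 < t := hs.trans hst
  have hts : 0 < t - s := by linarith
  have hpow : (t - s) ^ (-n / 2) * s ^ (-(n + 1) / 2) ≤
      θ ^ (-(n + 1) / 2) * t ^ (-n / 2) * (t - s) ^ (-(n + 1) / 2) := by
    have hs' : s ^ (-(n + 1) / 2) ≤ θ ^ (-(n + 1) / 2) * t ^ (-(n + 1) / 2) := by
      rw [← mul_rpow hθ.le ht.le]
      exact rpow_le_rpow_of_nonpos (by positivity) hsθ (by linarith)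
    calc (t - s) ^ (-n / 2) * s ^ (-(n + 1) / 2)
        ≤ θ ^ (-(n + 1) / 2) * ((t - s) ^ (-n / 2) * t ^ (-(n + 1) / 2)) := by
          rw [mul_left_comm]; gcongr
      _ ≤ θ ^ (-(n + 1) / 2) * (t ^ (-n / 2) * (t - s) ^ (-(n + 1) / 2)) := by
          refine mul_le_mul_of_nonneg_left ?_ (by positivity)
          exact rpow_mul_rpow_le_rpow_mul_rpow hts (sub_le_self t hs.le) (by linarith)
      _ = _ := by ring
  have hexp : exp (-(β₁ * a ^ 2) / (t - s)) * exp (-(β₂ * b ^ 2) / s) ≤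
      exp (-(β₁ * c ^ 2) / t) * exp (-(C * a ^ 2) / (t - s)) := by
    rw [show exp (-(β₁ * a ^ 2) / (t - s)) =
        exp (-((β₁ - C) * a ^ 2) / (t - s)) * exp (-(C * a ^ 2) / (t - s))
      by rw [← exp_add]; ring_nf, mul_right_comm]
    gcongr
    exact exp_mul_exp_le_of_div_add_div_le (by linarith) hβ₁ hβ₂ hs hst hc hcab hvar
  unfold gker
  calc (t - s) ^ (-n / 2) * exp (-(β₁ * a ^ 2) / (t - s)) *
        (s ^ (-(n + 1) / 2) * exp (-(β₂ * b ^ 2) / s))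
      = (t - s) ^ (-n / 2) * s ^ (-(n + 1) / 2) *
          (exp (-(β₁ * a ^ 2) / (t - s)) * exp (-(β₂ * b ^ 2) / s)) := by ring
    _ ≤ θ ^ (-(n + 1) / 2) * t ^ (-n / 2) * (t - s) ^ (-(n + 1) / 2) *
          (exp (-(β₁ * c ^ 2) / t) * exp (-(C * a ^ 2) / (t - s))) := by gcongr
    _ = _ := by ring

/-- The splitting point `θ = (1 + β₁/β₂)/2` is chosen so that `β₁ - C ≥ β₁/2` makes
`(t - s)/(β₁ - C) + s/β₂ ≤ t/β₁` hold for `s ≥ θ t`. -/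
lemma exists_gker_mul_gker_succ_le {n β₁ β₂ C : ℝ} (hn : 0 ≤ n) (h₁ : 0 < β₁) (h₁₂ : β₁ < β₂)
    (hC₂ : C ≤ β₂ - β₁) (hC₁ : C ≤ β₁ / 2) :
    ∃ K > 0, ∀ ⦃s t a b c : ℝ⦄, 0 < s → s < t → 0 ≤ c → c ≤ a + b →
      gker n β₁ (t - s) a * gker (n + 1) β₂ s b ≤
        K * gker n β₁ t c * (gker (n + 1) C s b + gker (n + 1) C (t - s) a) := by
  have hβ₂ : 0 < β₂ := h₁.trans h₁₂
  have hr : β₁ / β₂ < 1 := (div_lt_one hβ₂).mpr h₁₂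
  have hr₀ : 0 < β₁ / β₂ := by positivity
  set θ := (1 + β₁ / β₂) / 2 with hθ
  have hθ₀ : 0 < θ := by linarith
  have hθ₁ : θ < 1 := by linarith
  refine ⟨(1 - θ) ^ (-n / 2) + θ ^ (-(n + 1) / 2), by positivity,
    fun s t a b c hs hst hc hcab => ?_⟩
  have ht : 0 < t := hs.trans hst
  have hG := gker_nonneg (n := n) (β := β₁) (r := c) ht.le
  have hP := gker_nonneg (n := n + 1) (β := C) (r := b) hs.le
  have hQ := gker_nonneg (n := n + 1) (β := C) (r := a) (sub_pos.mpr hst).le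
  rcases le_or_gt s (θ * t) with hsθ | hsθ
  · calc _ ≤ (1 - θ) ^ (-n / 2) * gker n β₁ t c * gker (n + 1) (β₂ - β₁) s b :=
          gker_mul_gker_le_of_le_mul hn h₁ hθ₁ hs hst hsθ hc hcab
      _ ≤ (1 - θ) ^ (-n / 2) * gker n β₁ t c * gker (n + 1) C s b := by
          gcongr; exact gker_le_gker_of_le_rate b hs.le hC₂
      _ ≤ _ := by gcongr <;> exact le_add_of_nonneg_right (by positivity)
  · have hts : t - s ≤ (1 - β₁ / β₂) * t / 2 := by rw [hθ] at hsθ; linarith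
    have hvar : (t - s) / (β₁ - C) + s / β₂ ≤ t / β₁ :=
      calc (t - s) / (β₁ - C) + s / β₂ ≤ (t - s) / (β₁ / 2) + t / β₂ := by
            gcongr; linarith
        _ ≤ (1 - β₁ / β₂) * t / 2 / (β₁ / 2) + t / β₂ := by gcongr
        _ = t / β₁ := by field_simp; ring
    calc _ ≤ θ ^ (-(n + 1) / 2) * gker n β₁ t c * gker (n + 1) C (t - s) a :=
          gker_mul_gker_succ_le_of_mul_le hn h₁ hβ₂ (by linarith) hθ₀ hs hst hsθ.le hvar hc hcab
      _ ≤ _ := by gcongr <;> exact le_add_of_nonneg_left (by positivity)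

lemma exp_neg_div_le_factorial_mul_pow_div {c u : ℝ} (hc : 0 < c) (hu : 0 < u) (k : ℕ) :
    exp (-c / u) ≤ k.factorial * u ^ k / c ^ k := by
  have h : c ^ k / (k.factorial * u ^ k) ≤ exp (c / u) := by
    rw [show c ^ k / (k.factorial * u ^ k) = (c / u) ^ k / k.factorial by rw [div_pow]; ring]
    exact pow_div_factorial_le_exp _ (div_pos hc hu).le k
  rw [neg_div, exp_neg, ← inv_div (c ^ k)]
  exact inv_anti₀ (by positivity) h

lemma integrableOn_gker_Ioc (n : ℝ) {β r : ℝ} (hβ : 0 < β) (hr : r ≠ 0) (T : ℝ) :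
    IntegrableOn (fun u => gker n β u r) (Ioc 0 T) := by
  set c := β * r ^ 2
  have hc : 0 < c := by positivity
  set k := ⌈n / 2⌉₊
  have hk : 0 ≤ (k : ℝ) - n / 2 := sub_nonneg.mpr (Nat.le_ceil _)
  refine Measure.integrableOn_of_bounded (M := k.factorial / c ^ k * T ^ ((k : ℝ) - n / 2))
    measure_Ioc_lt_top.ne ?_ ?_
  · exact ((measurable_id.pow_const _).mul
      ((measurable_const.div measurable_id).exp)).aestronglyMeasurable
  rw [ae_restrict_iff' measurableSet_Ioc]
  filter_upwards with u ⟨hu, huT⟩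
  rw [Real.norm_of_nonneg (gker_nonneg hu.le)]
  calc u ^ (-n / 2) * exp (-c / u) ≤ u ^ (-n / 2) * (k.factorial * u ^ k / c ^ k) := by
        gcongr; exact exp_neg_div_le_factorial_mul_pow_div hc hu k
    _ = k.factorial / c ^ k * u ^ ((k : ℝ) - n / 2) := by
        rw [sub_eq_neg_add, rpow_add hu, rpow_natCast, neg_div]; ring
    _ ≤ k.factorial / c ^ k * T ^ ((k : ℝ) - n / 2) := by gcongr

lemma integrableOn_Ioc_comp_sub_left {f : ℝ → ℝ} {t : ℝ} (ht : 0 ≤ t)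
    (hf : IntegrableOn f (Ioc 0 t)) : IntegrableOn (fun s => f (t - s)) (Ioc 0 t) := by
  rw [← intervalIntegrable_iff_integrableOn_Ioc_of_le ht] at hf ⊢
  simpa using (hf.comp_sub_left t).symm

lemma setIntegral_Ioc_comp_sub_left (f : ℝ → ℝ) {t : ℝ} (ht : 0 ≤ t) :
    ∫ s in Ioc 0 t, f (t - s) = ∫ s in Ioc 0 t, f s := by
  rw [← intervalIntegral.integral_of_le ht, ← intervalIntegral.integral_of_le ht,
    intervalIntegral.integral_comp_sub_left f t, sub_zero, sub_self]

lemma not_integrableOn_Ioo_of_const_mul_rpow_le {f : ℝ → ℝ} {m e r : ℝ} (hm : 0 < m)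
    (he : e ≤ -1) (hr : 0 < r) (hf : ∀ s ∈ Ioo 0 r, m * s ^ e ≤ f s) :
    ¬ IntegrableOn f (Ioo 0 r) := by
  intro h
  have hpow : IntegrableOn (fun s => s ^ e) (Ioo 0 r) := by
    refine (h.const_mul m⁻¹).mono' (measurable_id.pow_const e).aestronglyMeasurable ?_
    rw [ae_restrict_iff' measurableSet_Ioo]
    filter_upwards with s hs
    rw [Real.norm_of_nonneg (rpow_nonneg hs.1.le e), le_inv_mul_iff₀ hm]
    exact hf s hs
  rw [intervalIntegral.integrableOn_Ioo_rpow_iff hr] at hpow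
  linarith

lemma not_integrableOn_gker_mul_gker_zero {n : ℝ} (hn : 1 ≤ n) {β₁ t : ℝ} (hβ₁ : 0 ≤ β₁)
    (ht : 0 < t) (a β₂ : ℝ) :
    ¬ IntegrableOn (fun s => gker n β₁ (t - s) a * gker (n + 1) β₂ s 0) (Ioc 0 t) := by
  intro h
  refine not_integrableOn_Ioo_of_const_mul_rpow_le (e := -(n + 1) / 2)
    (m := t ^ (-n / 2) * exp (-(β₁ * a ^ 2) / (t / 2))) (by positivity) (by linarith)
    (half_pos ht) (fun s ⟨hs, hst⟩ => ?_) (h.mono_set fun s hs => ⟨hs.1, by linarith [hs.2]⟩)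
  rw [gker_zero_right]
  exact mul_le_mul_of_nonneg_right (rpow_mul_exp_le_gker a (by linarith) hβ₁ (half_pos ht)
    (by linarith : t / 2 ≤ t - s) (sub_le_self t hs.le)) (rpow_nonneg hs.le _)

lemma not_integrableOn_gker_zero_mul_gker {n : ℝ} (hn : 2 ≤ n) {β₂ t : ℝ} (hβ₂ : 0 ≤ β₂)
    (ht : 0 < t) (β₁ b : ℝ) :
    ¬ IntegrableOn (fun s => gker n β₁ (t - s) 0 * gker (n + 1) β₂ s b) (Ioc 0 t) := by
  intro h
  refine not_integrableOn_Ioo_of_const_mul_rpow_le (e := -n / 2)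
    (m := t ^ (-(n + 1) / 2) * exp (-(β₂ * b ^ 2) / (t / 2))) (by positivity) (by linarith)
    (half_pos ht) (fun s ⟨hs, hst⟩ => ?_)
    ((integrableOn_Ioc_comp_sub_left ht.le h).mono_set fun s hs => ⟨hs.1, by linarith [hs.2]⟩)
  rw [sub_sub_cancel, gker_zero_right, mul_comm]
  exact mul_le_mul_of_nonneg_left (rpow_mul_exp_le_gker b (by linarith) hβ₂ (half_pos ht)
    (by linarith : t / 2 ≤ t - s) (sub_le_self t hs.le)) (rpow_nonneg hs.le _)

lemma setIntegral_le_mul_Nker_add (d : ℕ) {f : ℝ → ℝ} {C t a b M : ℝ} (hC : 0 < C)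
    (ha : a ≠ 0) (hb : b ≠ 0) (ht : 0 ≤ t) (hf : IntegrableOn f (Ioc 0 t))
    (hbound : ∀ s ∈ Ioo 0 t, f s ≤ M * (gker (d + 1) C s b + gker (d + 1) C (t - s) a)) :
    ∫ s in Ioc 0 t, f s ≤ M * (Nker d C t a + Nker d C t b) := by
  have hgb := integrableOn_gker_Ioc (d + 1) hC hb t
  have hga := integrableOn_Ioc_comp_sub_left ht (integrableOn_gker_Ioc (d + 1) hC ha t)
  calc ∫ s in Ioc 0 t, f s = ∫ s in Ioo 0 t, f s := integral_Ioc_eq_integral_Ioo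
    _ ≤ ∫ s in Ioo 0 t, M * (gker (d + 1) C s b + gker (d + 1) C (t - s) a) :=
        setIntegral_mono_on (hf.mono_set Ioo_subset_Ioc_self)
          (IntegrableOn.mono_set ((hgb.add hga).const_mul M) Ioo_subset_Ioc_self)
          measurableSet_Ioo hbound
    _ = M * (Nker d C t a + Nker d C t b) := by
        rw [← integral_Ioc_eq_integral_Ioo, integral_const_mul, integral_add hgb hga,
          setIntegral_Ioc_comp_sub_left (fun u => gker (d + 1) C u a) ht, add_comm,
          Nker_eq_integral_gker, Nker_eq_integral_gker]

/-- Gaussian 3P-type inequality. -/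
theorem gaussian_threeP (d : ℕ) (hd : 2 ≤ d) (β₁ β₂ : ℝ) (h₁ : 0 < β₁) (h₁₂ : β₁ < β₂) :
    ∃ Cg : ℝ, 0 < Cg ∧
      ∀ t : ℝ, 0 < t → ∀ x y z : Euc d,
        (∫ s in Set.Ioc (0 : ℝ) t,
            gker d β₁ (t - s) ‖x - z‖ * s ^ (-(1 : ℝ) / 2) * gker d β₂ s ‖z - y‖)
          ≤ Cg * (Nker d (min (β₂ - β₁) (β₁ / 2)) t ‖x - z‖ +
                Nker d (min (β₂ - β₁) (β₁ / 2)) t ‖z - y‖) * gker d β₁ t ‖x - y‖ := by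
  obtain ⟨K, hK, hbound⟩ := exists_gker_mul_gker_succ_le (n := d) d.cast_nonneg h₁ h₁₂
    (min_le_left (β₂ - β₁) (β₁ / 2)) (min_le_right _ _)
  refine ⟨K, hK, fun t ht x y z => ?_⟩
  rw [setIntegral_congr_fun measurableSet_Ioc fun s hs => by
    rw [mul_assoc, rpow_neg_one_half_mul_gker _ hs.1]]
  -- The integrand is integrable only if `x ≠ z` and `z ≠ y`; otherwise Lean's integral is `0`.
  by_cases hf : IntegrableOn (fun s => gker d β₁ (t - s) ‖x - z‖ * gker (d + 1) β₂ s ‖z - y‖)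
    (Ioc 0 t)
  · have hxz : ‖x - z‖ ≠ 0 := fun h =>
      not_integrableOn_gker_zero_mul_gker (by exact_mod_cast hd) (h₁.trans h₁₂).le ht _ _ (h ▸ hf)
    have hzy : ‖z - y‖ ≠ 0 := fun h =>
      not_integrableOn_gker_mul_gker_zero (by exact_mod_cast one_le_two.trans hd) h₁.le ht _ _
        (h ▸ hf)
    calc _ ≤ K * gker d β₁ t ‖x - y‖ * (Nker d (min (β₂ - β₁) (β₁ / 2)) t ‖x - z‖ +
          Nker d (min (β₂ - β₁) (β₁ / 2)) t ‖z - y‖) :=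
          setIntegral_le_mul_Nker_add d (lt_min (by linarith) (by linarith)) hxz hzy ht.le hf
            fun s hs => hbound hs.1 hs.2 (norm_nonneg _) (norm_sub_le_norm_sub_add_norm_sub x z y)
      _ = _ := by ring
  · rw [integral_undef hf]
    have := gker_nonneg (n := d) (β := β₁) (r := ‖x - y‖) ht.le
    have := Nker_nonneg d (min (β₂ - β₁) (β₁ / 2)) t ‖x - z‖
    have := Nker_nonneg d (min (β₂ - β₁) (β₁ / 2)) t ‖z - y‖
    positivity
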